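/- arXiv:quant-ph/0212096 — 2 statements merged into one kernel-verified Lean document; each statement's English description precedes it below -/
import Mathlib

section
/- For all positive integers ℓ, m, n and any commutative semiring K, the stride permutation matrices satisfy the recursive identity P_n^{ℓmn} = (P_n^{ℓn} ⊗ I_m) · (I_ℓ ⊗ P_n^{mn}), where ⊗ denotes the Kronecker product and I_k the k×k identity matrix. -/
open Matrix

/-- The `mn`-point stride-`n` permutation, as a permutation of `Fin N` (where `N = m * n`):
it sends the index of `e_i^m ⊗ e_j^n` (i.e. `n*i + j`, zero-based) to the index of
`e_j^n ⊗ e_i^m` (i.e. `m*j + i`). -/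
def strideEquiv (N m n : ℕ) (h : N = m * n) : Fin N ≃ Fin N :=
  (finCongr h).trans <|
    finProdFinEquiv.symm.trans <|
      (Equiv.prodComm (Fin m) (Fin n)).trans <|
        finProdFinEquiv.trans (finCongr (by rw [h]; exact Nat.mul_comm n m))

/-- The `mn`-point stride-`n` permutation matrix `P_n^{mn}`: the `N × N` permutation matrix
(`N = m * n`) determined by `P_n^{mn} · (e_i^m ⊗ e_j^n) = e_j^n ⊗ e_i^m`. -/
def strideMat (K : Type*) [Semiring K] (N m n : ℕ) (h : N = m * n) :
    Matrix (Fin N) (Fin N) K :=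
  Matrix.of fun a b => if a = strideEquiv N m n h b then 1 else 0

/-- Kronecker (tensor) product of matrices, with row-major indexing by `Fin`:
the `(n*i + s, q*j + t)` entry of `kron A B` is `A i j * B s t`. -/
def kron {K : Type*} [Mul K] {m n p q : ℕ}
    (A : Matrix (Fin m) (Fin n) K) (B : Matrix (Fin p) (Fin q) K) :
    Matrix (Fin (m * p)) (Fin (n * q)) K :=
  Matrix.reindex finProdFinEquiv finProdFinEquiv (Matrix.kroneckerMap (· * ·) A B)

/-- Cast a matrix along equalities of its dimensions. -/
def mcast {K : Type*} {a b c d : ℕ} (h₁ : a = b) (h₂ : c = d)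
    (A : Matrix (Fin a) (Fin c) K) : Matrix (Fin b) (Fin d) K :=
  Matrix.reindex (finCongr h₁) (finCongr h₂) A

/-!
Both sides are permutation matrices, so it suffices to compare permutations of indices. Writing
an index of `Fin (ℓ * m * n)` in mixed radix as `(i, j, k) ∈ Fin ℓ × Fin m × Fin n`, the
stride-`n` permutation is the rotation `(i, j, k) ↦ (k, i, j)`, which factors as
`(i, j, k) ↦ (i, k, j)` (the factor `I_ℓ ⊗ P_n^{mn}`) followed by `(i, k, j) ↦ (k, i, j)`
(the factor `P_n^{ℓn} ⊗ I_m`).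
-/

open Equiv

namespace Matrix

variable {ι κ R : Type*} [DecidableEq ι] [DecidableEq κ]

theorem reindex_permMatrix [Zero R] [One R] (e : ι ≃ κ) (σ : Perm ι) :
    reindex e e (σ.permMatrix R) = (e.permCongr σ).permMatrix R := by
  ext i j
  simp [PEquiv.toMatrix_apply, eq_symm_apply]

open scoped Kronecker in
theorem permMatrix_kronecker [MulZeroOneClass R] (σ : Perm ι) (τ : Perm κ) :
    σ.permMatrix R ⊗ₖ τ.permMatrix R = Perm.permMatrix R (σ.prodCongr τ) := by
  ext ⟨i, k⟩ ⟨j, l⟩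
  simp [PEquiv.toMatrix_apply, ← ite_and, and_comm]

end Matrix

theorem kron_permMatrix {R : Type*} [MulZeroOneClass R] {m n : ℕ}
    (σ : Perm (Fin m)) (τ : Perm (Fin n)) :
    kron (σ.permMatrix R) (τ.permMatrix R) =
      Perm.permMatrix R (finProdFinEquiv.permCongr (σ.prodCongr τ)) :=
  (congrArg (reindex _ _) (permMatrix_kronecker σ τ)).trans
    (reindex_permMatrix _ _)

theorem mcast_permMatrix {R : Type*} [Zero R] [One R] {a b : ℕ} (h : a = b)
    (σ : Perm (Fin a)) :
    mcast h h (σ.permMatrix R) = Perm.permMatrix R ((finCongr h).permCongr σ) :=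
  reindex_permMatrix _ _

theorem strideMat_eq_permMatrix (K : Type*) [Semiring K] (N m n : ℕ) (h : N = m * n) :
    strideMat K N m n h = Perm.permMatrix K (strideEquiv N m n h)⁻¹ := by
  ext a b
  simp [strideMat, PEquiv.toMatrix_apply, Perm.inv_def, eq_comm, eq_symm_apply]

theorem strideEquiv_finProdFinEquiv (m n : ℕ) (i : Fin m) (j : Fin n) :
    strideEquiv (m * n) m n rfl (finProdFinEquiv (i, j)) =
      Fin.cast (mul_comm n m) (finProdFinEquiv (j, i)) := by
  simp [strideEquiv]

theorem strideEquiv_recursive (ℓ m n : ℕ) :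
    strideEquiv (ℓ * m * n) (ℓ * m) n rfl =
      (finCongr (mul_right_comm ℓ n m)).permCongr
          (finProdFinEquiv.permCongr ((strideEquiv (ℓ * n) ℓ n rfl).prodCongr 1)) *
        (finCongr (mul_assoc ℓ m n).symm).permCongr
          (finProdFinEquiv.permCongr
            ((1 : Perm (Fin ℓ)).prodCongr (strideEquiv (m * n) m n rfl))) := by
  refine Equiv.ext fun x => ?_
  obtain ⟨⟨y, k⟩, rfl⟩ := finProdFinEquiv.surjective x
  obtain ⟨⟨i, j⟩, rfl⟩ := finProdFinEquiv.surjective y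
  have hregroup₁ : Fin.cast (mul_assoc ℓ m n) (finProdFinEquiv (finProdFinEquiv (i, j), k)) =
      finProdFinEquiv (i, finProdFinEquiv (j, k)) := by
    ext; simp; ring
  have hregroup₂ : Fin.cast (by ring : ℓ * (m * n) = ℓ * n * m)
      (finProdFinEquiv (i, Fin.cast (mul_comm n m) (finProdFinEquiv (k, j)))) =
        finProdFinEquiv (finProdFinEquiv (i, k), j) := by
    ext; simp; ring
  simp only [Perm.mul_apply, permCongr_apply, finCongr_symm, finCongr_apply, Fin.cast_cast,
    hregroup₁, symm_apply_apply, prodCongr_apply, Prod.map, Perm.one_apply,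
    strideEquiv_finProdFinEquiv, hregroup₂]
  ext; simp; ring

/-- For all positive integers `ℓ, m, n` and any commutative semiring `K`,
`P_n^{ℓmn} = (P_n^{ℓn} ⊗ I_m) · (I_ℓ ⊗ P_n^{mn})`. -/
theorem stride_recursive (K : Type*) [CommSemiring K] (ℓ m n : ℕ) :
    strideMat K (ℓ * m * n) (ℓ * m) n (by ring) =
      mcast (show ℓ * n * m = ℓ * m * n by ring) (show ℓ * n * m = ℓ * m * n by ring)
          (kron (strideMat K (ℓ * n) ℓ n rfl) (1 : Matrix (Fin m) (Fin m) K)) *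
        mcast (show ℓ * (m * n) = ℓ * m * n by ring) (show ℓ * (m * n) = ℓ * m * n by ring)
          (kron (1 : Matrix (Fin ℓ) (Fin ℓ) K) (strideMat K (m * n) m n rfl)) := by
  simp only [strideMat_eq_permMatrix, ← permMatrix_one (R := K) (n := Fin m),
    ← permMatrix_one (R := K) (n := Fin ℓ), kron_permMatrix, mcast_permMatrix,
    ← permMatrix_mul]
  rw [strideEquiv_recursive, _root_.mul_inv_rev]
  -- `permCongr` and `prodCongr` commute with inversion definitionally
  rfl
end

section
/- Let K be a commutative semiring, let n ≥ 1, and let T = P_2^4 be the 4×4 swap matrix. Then the ordered matrix product ∏_{i=1}^{n−1} (I_2^{⊗(i−1)} ⊗ T ⊗ I_2^{⊗(n−1−i)}) (factors multiplied left to right in increasing order of i) equals the stride permutation matrix P_2^{2^n}, and it is the two-sided inverse of ∏_{i=1}^{n−1} (I_2^{⊗(n−1−i)} ⊗ T ⊗ I_2^{⊗(i−1)}); in particular, applied to any simple tensor v_1 ⊗ ⋯ ⊗ v_n with each v_i ∈ K², it yields v_n ⊗ v_1 ⊗ ⋯ ⊗ v_{n−1}. -/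
open Matrix

/-- The 4 × 4 swap matrix `T = P_2^4`, with rows `(1,0,0,0), (0,0,1,0), (0,1,0,0), (0,0,0,1)`:
it satisfies `T · (u ⊗ w) = w ⊗ u` for all `u, w ∈ K²`. -/
def swapT (K : Type*) [Semiring K] : Matrix (Fin (2 * 2)) (Fin (2 * 2)) K :=
  strideMat K (2 * 2) 2 2 rfl

/-- The `j`-th factor (`j` zero-based, so `i = j + 1` in one-based numbering)
`I_2^{⊗(n-1-i)} ⊗ T ⊗ I_2^{⊗(i-1)}`, viewed as a `2^n × 2^n` matrix. -/
def swapFactorA (K : Type*) [Semiring K] (n : ℕ) (j : Fin (n - 1)) :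
    Matrix (Fin (2 ^ n)) (Fin (2 ^ n)) K :=
  mcast
    (show 2 ^ (n - 2 - (j : ℕ)) * (2 * 2) * 2 ^ (j : ℕ) = 2 ^ n from by
      have hj : (j : ℕ) < n - 1 := j.isLt
      rw [show (2 * 2 : ℕ) = 2 ^ 2 from rfl, ← pow_add, ← pow_add]
      congr 1
      omega)
    (show 2 ^ (n - 2 - (j : ℕ)) * (2 * 2) * 2 ^ (j : ℕ) = 2 ^ n from by
      have hj : (j : ℕ) < n - 1 := j.isLt
      rw [show (2 * 2 : ℕ) = 2 ^ 2 from rfl, ← pow_add, ← pow_add]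
      congr 1
      omega)
    (kron
      (kron (1 : Matrix (Fin (2 ^ (n - 2 - (j : ℕ)))) (Fin (2 ^ (n - 2 - (j : ℕ)))) K)
        (swapT K))
      (1 : Matrix (Fin (2 ^ (j : ℕ))) (Fin (2 ^ (j : ℕ))) K))

/-- The `j`-th factor (`j` zero-based, so `i = j + 1` in one-based numbering)
`I_2^{⊗(i-1)} ⊗ T ⊗ I_2^{⊗(n-1-i)}`, viewed as a `2^n × 2^n` matrix. -/
def swapFactorB (K : Type*) [Semiring K] (n : ℕ) (j : Fin (n - 1)) :
    Matrix (Fin (2 ^ n)) (Fin (2 ^ n)) K :=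
  mcast
    (show 2 ^ (j : ℕ) * (2 * 2) * 2 ^ (n - 2 - (j : ℕ)) = 2 ^ n from by
      have hj : (j : ℕ) < n - 1 := j.isLt
      rw [show (2 * 2 : ℕ) = 2 ^ 2 from rfl, ← pow_add, ← pow_add]
      congr 1
      omega)
    (show 2 ^ (j : ℕ) * (2 * 2) * 2 ^ (n - 2 - (j : ℕ)) = 2 ^ n from by
      have hj : (j : ℕ) < n - 1 := j.isLt
      rw [show (2 * 2 : ℕ) = 2 ^ 2 from rfl, ← pow_add, ← pow_add]
      congr 1
      omega)
    (kron
      (kron (1 : Matrix (Fin (2 ^ (j : ℕ))) (Fin (2 ^ (j : ℕ))) K) (swapT K))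
      (1 : Matrix (Fin (2 ^ (n - 2 - (j : ℕ)))) (Fin (2 ^ (n - 2 - (j : ℕ)))) K))

/-! Each factor `I ⊗ T ⊗ I` is the permutation matrix of the map exchanging two adjacent binary
digits of the (zero-based) index, and `permMatrixHom` turns products of permutations into products
of matrices. Exchanging the digits at positions `(0, 1)`, then `(1, 2)`, …, then `(n - 2, n - 1)`
carries the lowest digit to the top and shifts the others down: this is the stride-2 permutation
`x ↦ x / 2 + 2 ^ (n - 1) * (x % 2)`. The second product consists of the same involutions in the
reverse order, hence is the inverse of the first. -/

open Equiv

section PermMatrix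

variable {K : Type*} [Semiring K]

theorem permMatrixHom_apply_apply {ι : Type*} [DecidableEq ι] [Fintype ι] (σ : Perm ι)
    (i j : ι) : permMatrixHom (R := K) σ i j = if i = σ j then 1 else 0 := by
  simp only [permMatrixHom_apply, PEquiv.toMatrix_apply, toPEquiv_apply, Option.mem_def,
    Option.some.injEq, Perm.inv_def, symm_apply_eq]

theorem strideMat_eq_permMatrixHom (N m n : ℕ) (h : N = m * n) :
    strideMat K N m n h = permMatrixHom (strideEquiv N m n h) := by
  ext a b
  rw [permMatrixHom_apply_apply]
  rfl

theorem reindex_permMatrixHom {ι κ : Type*} [DecidableEq ι] [Fintype ι] [DecidableEq κ]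
    [Fintype κ] (e : ι ≃ κ) (σ : Perm ι) :
    reindex e e (permMatrixHom (R := K) σ) = permMatrixHom (e.permCongr σ) := by
  ext a b
  simp only [reindex_apply, submatrix_apply, permMatrixHom_apply_apply, permCongr_apply,
    ← e.symm_apply_eq]

theorem kroneckerMap_permMatrixHom {ι κ : Type*} [DecidableEq ι] [Fintype ι] [DecidableEq κ]
    [Fintype κ] (σ : Perm ι) (τ : Perm κ) :
    kroneckerMap (· * ·) (permMatrixHom (R := K) σ) (permMatrixHom τ) =
      permMatrixHom (σ.prodCongr τ) := by
  ext ⟨a, c⟩ ⟨b, d⟩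
  simp only [kroneckerMap_apply, permMatrixHom_apply_apply, prodCongr_apply, Prod.map_apply,
    Prod.mk.injEq, mul_ite, ite_mul, one_mul, zero_mul, mul_zero, ← ite_and, and_comm]

theorem kron_permMatrixHom {m p : ℕ} (σ : Perm (Fin m)) (τ : Perm (Fin p)) :
    kron (permMatrixHom (R := K) σ) (permMatrixHom τ) =
      permMatrixHom (finProdFinEquiv.permCongr (σ.prodCongr τ)) := by
  rw [kron, kroneckerMap_permMatrixHom, reindex_permMatrixHom]

theorem mcast_permMatrixHom {a b : ℕ} (h : a = b) (σ : Perm (Fin a)) :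
    mcast h h (permMatrixHom (R := K) σ) = permMatrixHom ((finCongr h).permCongr σ) :=
  reindex_permMatrixHom _ _

theorem list_prod_map_permMatrixHom {ι α : Type*} [DecidableEq α] [Fintype α] (l : List ι)
    (σ : ι → Perm α) :
    (l.map fun i => permMatrixHom (R := K) (σ i)).prod = permMatrixHom (l.map σ).prod := by
  rw [map_list_prod, List.map_map]
  rfl

end PermMatrix

def swapLowBits (q : ℕ) : ℕ := q / 4 * 4 + q % 2 * 2 + q / 2 % 2

/-- For `P = 2 ^ k`, exchanges the binary digits `k` and `k + 1` of `x`. -/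
def swapDigits (P x : ℕ) : ℕ := x % P + P * swapLowBits (x / P)

/-- For `P = 2 ^ k` and `x < 2 ^ (k + m + 1)`, moves the binary digit `k` of `x` to position
`k + m` and shifts the digits `k + 1, …, k + m` down by one. -/
def rotateDigits (P m x : ℕ) : ℕ := x % P + P * (x / P / 2 + 2 ^ m * (x / P % 2))

theorem swapLowBits_mod_two (q : ℕ) : swapLowBits q % 2 = q / 2 % 2 := by
  unfold swapLowBits
  omega

theorem swapLowBits_div_two (q : ℕ) : swapLowBits q / 2 = q / 4 * 2 + q % 2 := by
  unfold swapLowBits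
  omega

theorem swapLowBits_swapLowBits (q : ℕ) : swapLowBits (swapLowBits q) = q := by
  obtain ⟨r, e, hr, rfl⟩ : ∃ r e, r < 4 ∧ q = r + 4 * e :=
    ⟨q % 4, q / 4, Nat.mod_lt _ (by norm_num), (Nat.mod_add_div q 4).symm⟩
  interval_cases r <;> simp only [swapLowBits] <;> omega

theorem mod_add_mul_mod_self {P : ℕ} (x s : ℕ) : (x % P + P * s) % P = x % P := by
  rw [Nat.add_mul_mod_self_left, Nat.mod_mod]

theorem mod_add_mul_div_self {P : ℕ} (hP : 0 < P) (x s : ℕ) : (x % P + P * s) / P = s := by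
  rw [Nat.add_mul_div_left _ _ hP, Nat.mod_div_self, zero_add]

theorem swapDigits_swapDigits {P : ℕ} (hP : 0 < P) (x : ℕ) :
    swapDigits P (swapDigits P x) = x := by
  rw [swapDigits, swapDigits, mod_add_mul_mod_self, mod_add_mul_div_self hP,
    swapLowBits_swapLowBits, Nat.mod_add_div]

theorem rotateDigits_zero {P x : ℕ} (hx : x < P * 2) : rotateDigits P 0 x = x := by
  have hq : x / P < 2 := Nat.div_lt_of_lt_mul hx
  conv_rhs => rw [← Nat.mod_add_div x P]
  rw [rotateDigits, pow_zero]
  congr 2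
  generalize x / P = q at hq ⊢
  omega

theorem rotateDigits_swapDigits {P : ℕ} (hP : 0 < P) (m x : ℕ) :
    rotateDigits (P * 2) m (swapDigits P x) = rotateDigits P (m + 1) x := by
  rw [rotateDigits, rotateDigits, swapDigits, Nat.mod_mul, ← Nat.div_div_eq_div_mul,
    mod_add_mul_mod_self, mod_add_mul_div_self hP, swapLowBits_mod_two, swapLowBits_div_two]
  generalize x / P = q
  have hdiv : (q / 4 * 2 + q % 2) / 2 = q / 4 := by omega
  have hmod : (q / 4 * 2 + q % 2) % 2 = q % 2 := by omega
  have hhalf : q / 2 = q / 2 % 2 + 2 * (q / 4) := by omega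
  rw [hdiv, hmod, pow_succ]
  conv_rhs => rw [hhalf]
  ring

section SwapFactors

variable {K : Type*} [Semiring K]

theorem strideEquiv_val (N m n : ℕ) (h : N = m * n) (x : Fin N) :
    (strideEquiv N m n h x : ℕ) = x / n + m * (x % n) := by
  simp [strideEquiv]

theorem two_pow_mul_four_mul_two_pow {a b n : ℕ} (h : a + 2 + b = n) :
    2 ^ a * (2 * 2) * 2 ^ b = 2 ^ n := by
  subst h
  ring

def adjSwap (a b n : ℕ) (h : 2 ^ a * (2 * 2) * 2 ^ b = 2 ^ n) : Perm (Fin (2 ^ n)) :=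
  (finCongr h).permCongr <| finProdFinEquiv.permCongr <|
    (finProdFinEquiv.permCongr ((1 : Perm (Fin (2 ^ a))).prodCongr
      (strideEquiv (2 * 2) 2 2 rfl))).prodCongr 1

theorem mcast_kron_swapT (a b n : ℕ) (h : 2 ^ a * (2 * 2) * 2 ^ b = 2 ^ n) :
    mcast h h (kron (kron (1 : Matrix (Fin (2 ^ a)) (Fin (2 ^ a)) K) (swapT K)) 1) =
      permMatrixHom (adjSwap a b n h) := by
  rw [← map_one permMatrixHom, ← map_one permMatrixHom, swapT, strideMat_eq_permMatrixHom,
    kron_permMatrixHom, kron_permMatrixHom, mcast_permMatrixHom, adjSwap]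

theorem adjSwap_val (a b n : ℕ) (h : 2 ^ a * (2 * 2) * 2 ^ b = 2 ^ n) (x : Fin (2 ^ n)) :
    (adjSwap a b n h x : ℕ) = swapDigits (2 ^ b) x := by
  simp only [adjSwap, permCongr_apply, finCongr_symm, finCongr_apply, Fin.val_cast,
    finProdFinEquiv_symm_apply, finProdFinEquiv_apply_val, prodCongr_apply, Prod.map_apply,
    Perm.coe_one, id_eq, Fin.coe_divNat, Fin.coe_modNat, strideEquiv_val, swapDigits, swapLowBits]
  congr 2
  generalize (x : ℕ) / 2 ^ b = q
  omega

def digitSwap (n k : ℕ) (hk : k + 2 ≤ n) : Perm (Fin (2 ^ n)) :=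
  adjSwap (n - 2 - k) k n (two_pow_mul_four_mul_two_pow (by omega))

theorem digitSwap_val (n k : ℕ) (hk : k + 2 ≤ n) (x : Fin (2 ^ n)) :
    (digitSwap n k hk x : ℕ) = swapDigits (2 ^ k) x :=
  adjSwap_val _ _ _ _ x

theorem digitSwap_inv (n k : ℕ) (hk : k + 2 ≤ n) : (digitSwap n k hk)⁻¹ = digitSwap n k hk :=
  inv_eq_of_mul_eq_one_right <| Equiv.ext fun x => Fin.ext <| by
    rw [Perm.mul_apply, digitSwap_val, digitSwap_val, swapDigits_swapDigits (by positivity),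
      Perm.one_apply]

theorem swapFactorA_eq (n : ℕ) (j : Fin (n - 1)) :
    swapFactorA K n j = permMatrixHom (digitSwap n j (by omega)) :=
  mcast_kron_swapT _ _ _ _

theorem swapFactorB_eq (n : ℕ) (j : Fin (n - 1)) :
    swapFactorB K n j = permMatrixHom (digitSwap n (n - 2 - j) (by omega)) := by
  rw [swapFactorB, mcast_kron_swapT]
  exact congrArg permMatrixHom (Equiv.ext fun x => Fin.ext <| by rw [adjSwap_val, digitSwap_val])

end SwapFactors

theorem val_list_prod_apply {ι : Type*} {N : ℕ} (l : List ι) (σ : ι → Perm (Fin N))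
    (f : ι → ℕ → ℕ) (hf : ∀ i x, (σ i x : ℕ) = f i x) (x : Fin N) :
    ((l.map σ).prod x : ℕ) = l.foldr f x := by
  induction l with
  | nil => rfl
  | cons i l ih => rw [List.map_cons, List.prod_cons, Perm.mul_apply, hf, ih, List.foldr_cons]

theorem foldr_range_swapDigits {n k : ℕ} (hk : k < n) (x : Fin (2 ^ n)) :
    (List.range k).foldr (fun j => swapDigits (2 ^ (n - 2 - j))) x =
      rotateDigits (2 ^ (n - 1 - k)) k x := by
  induction k generalizing x with
  | zero =>
    rw [List.range_zero, List.foldr_nil, rotateDigits_zero]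
    rw [← pow_succ, Nat.sub_zero, Nat.sub_add_cancel hk]
    exact x.isLt
  | succ k ih =>
    -- the intermediate value is again an index in `Fin (2 ^ n)`, so the induction hypothesis applies
    rw [List.range_succ, List.foldr_append, List.foldr_cons, List.foldr_nil,
      ← digitSwap_val n (n - 2 - k) (by omega), ih (by omega), digitSwap_val,
      show n - 1 - k = n - 2 - k + 1 by omega, pow_succ,
      rotateDigits_swapDigits (by positivity), show n - 1 - (k + 1) = n - 2 - k by omega]

theorem list_prod_digitSwap_eq_strideEquiv (n : ℕ) (h : 2 ^ n = 2 ^ (n - 1) * 2) :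
    ((List.finRange (n - 1)).map fun j : Fin (n - 1) => digitSwap n (n - 2 - j) (by omega)).prod =
      strideEquiv (2 ^ n) (2 ^ (n - 1)) 2 h := by
  have hn : n ≠ 0 := by
    rintro rfl
    norm_num at h
  refine Equiv.ext fun x => Fin.ext ?_
  rw [val_list_prod_apply _ _ (fun j : Fin (n - 1) => swapDigits (2 ^ (n - 2 - (j : ℕ))))
    (fun j x => digitSwap_val _ _ _ x)]
  have hrot := foldr_range_swapDigits (show n - 1 < n by omega) x
  rw [← List.map_coe_finRange_eq_range, List.foldr_map] at hrot
  rw [hrot, strideEquiv_val, Nat.sub_self, pow_zero, rotateDigits, Nat.mod_one, Nat.div_one,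
    zero_add, one_mul]

theorem list_prod_digitSwap_eq_inv (n : ℕ) :
    ((List.finRange (n - 1)).map fun j : Fin (n - 1) => digitSwap n j (by omega)).prod =
      ((List.finRange (n - 1)).map
        fun j : Fin (n - 1) => digitSwap n (n - 2 - j) (by omega)).prod⁻¹ := by
  rw [List.prod_inv_reverse, List.map_map, ← List.map_reverse, List.finRange_reverse, List.map_map]
  refine congrArg List.prod (List.map_congr_left fun j _ => ?_)
  have hj : n - 2 - (Fin.rev j : ℕ) = j := by
    rw [Fin.val_rev]
    omega
  simp only [Function.comp_apply, digitSwap_inv, hj]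

/-- For a commutative semiring `K` and `n ≥ 1`, the ordered product
`∏_{i=1}^{n-1} (I_2^{⊗(i-1)} ⊗ T ⊗ I_2^{⊗(n-1-i)})` (factors multiplied left to right in
increasing order of `i`) equals the stride permutation matrix `P_2^{2^n}`, and it is the
two-sided inverse of `∏_{i=1}^{n-1} (I_2^{⊗(n-1-i)} ⊗ T ⊗ I_2^{⊗(i-1)})`. -/
theorem swap_product_eq_stride_two (K : Type*) [CommSemiring K] (n : ℕ) (hn : 1 ≤ n) :
    ((List.finRange (n - 1)).map (swapFactorB K n)).prod =
      strideMat K (2 ^ n) (2 ^ (n - 1)) 2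
        (by
          have h : n - 1 + 1 = n := Nat.sub_add_cancel hn
          calc (2 : ℕ) ^ n = 2 ^ (n - 1 + 1) := by rw [h]
            _ = 2 ^ (n - 1) * 2 := by rw [pow_succ]) ∧
    ((List.finRange (n - 1)).map (swapFactorB K n)).prod *
        ((List.finRange (n - 1)).map (swapFactorA K n)).prod = 1 ∧
    ((List.finRange (n - 1)).map (swapFactorA K n)).prod *
        ((List.finRange (n - 1)).map (swapFactorB K n)).prod = 1 := by
  have hB : swapFactorB K n = fun j : Fin (n - 1) => permMatrixHom (digitSwap n (n - 2 - j) (by omega)) :=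
    funext (swapFactorB_eq n)
  have hA : swapFactorA K n = fun j : Fin (n - 1) => permMatrixHom (digitSwap n j (by omega)) :=
    funext (swapFactorA_eq n)
  rw [hB, hA, list_prod_map_permMatrixHom, list_prod_map_permMatrixHom,
    list_prod_digitSwap_eq_inv, strideMat_eq_permMatrixHom]
  refine ⟨congrArg permMatrixHom (list_prod_digitSwap_eq_strideEquiv n _), ?_, ?_⟩
  · rw [← map_mul, mul_inv_cancel, map_one]
  · rw [← map_mul, inv_mul_cancel, map_one]
end
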